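/- Let φ be a state formula of PCTL*(◊,□) without implications, let M be a DTMC with initial state s_I, and let φ̇ be the rPCTL* state formula obtained from φ by dotting all temporal operators (replacing X, ◊, □ by Ẋ, ◊̇, □̇). Then M, s_I ⊨ φ if and only if V_M(s_I, φ̇) = 1111. -/
import Mathlib


open MeasureTheory
open scoped Classical ENNReal NNReal

/-! ### Discrete-time Markov chains, paths, cylinder sets -/

/-- A discrete-time Markov chain over atomic propositions `AP` with a finite
state set `S`, an initial state, a stochastic transition function with values
in `[0,1]`, and a labeling function. -/
structure DTMC (AP : Type) (S : Type) [Fintype S] where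
  init : S
  trans : S → S → ℝ≥0
  trans_le_one : ∀ s s', trans s s' ≤ 1
  trans_sum_one : ∀ s, ∑ s', trans s s' = 1
  label : S → Set AP

namespace DTMC

variable {AP S : Type} [Fintype S]

/-- Paths of `M` starting in `s`. -/
def Path (M : DTMC AP S) (s : S) : Type :=
  { π : ℕ → S // π 0 = s ∧ ∀ n, 0 < M.trans (π n) (π (n + 1)) }

/-- Paths of `M` (with arbitrary first state). -/
def PathU (M : DTMC AP S) : Type :=
  { π : ℕ → S // ∀ n, 0 < M.trans (π n) (π (n + 1)) }

/-- Forget the start state of a path. -/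
def Path.toU {M : DTMC AP S} {s : S} (π : M.Path s) : M.PathU :=
  ⟨π.1, π.2.2⟩

/-- The suffix `π[n..]` of a path. -/
def PathU.suffix {M : DTMC AP S} (π : M.PathU) (n : ℕ) : M.PathU :=
  ⟨fun i => π.1 (n + i), fun i => π.2 (n + i)⟩

/-- `ρ 0, …, ρ n` is a path prefix of `M` starting in `s`. -/
def IsPrefix (M : DTMC AP S) (s : S) (ρ : ℕ → S) (n : ℕ) : Prop :=
  ρ 0 = s ∧ ∀ i < n, 0 < M.trans (ρ i) (ρ (i + 1))

/-- The cylinder set of the prefix `ρ 0, …, ρ n`: all paths starting in `s`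
that extend this prefix. -/
def Cyl (M : DTMC AP S) (s : S) (ρ : ℕ → S) (n : ℕ) : Set (M.Path s) :=
  { π | ∀ i ≤ n, π.1 i = ρ i }

/-- The σ-algebra on `Paths(M,s)` generated by the cylinder sets. -/
instance instMeasurableSpacePath (M : DTMC AP S) (s : S) : MeasurableSpace (M.Path s) :=
  .generateFrom { A | ∃ ρ n, M.IsPrefix s ρ n ∧ A = M.Cyl s ρ n }

/-- `μ` is a probability measure on `Paths(M,s)` giving each cylinder set the
product of the transition probabilities along its prefix. -/
def IsCylinderMeasure (M : DTMC AP S) (s : S) (μ : Measure (M.Path s)) : Prop :=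
  IsProbabilityMeasure μ ∧
    ∀ ρ n, M.IsPrefix s ρ n →
      μ (M.Cyl s ρ n) = ∏ j ∈ Finset.range n, (M.trans (ρ j) (ρ (j + 1)) : ℝ≥0∞)

/-- Paths staying in `S'` forever. -/
def Safe (M : DTMC AP S) (s : S) (S' : Set S) : Set (M.Path s) :=
  { π | ∀ n, π.1 n ∈ S' }

/-- Paths staying in `S'` from some point on (all but finitely many positions). -/
def CoBuchi (M : DTMC AP S) (s : S) (S' : Set S) : Set (M.Path s) :=
  { π | ∃ m, ∀ n, m ≤ n → π.1 n ∈ S' }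

/-- Paths visiting `S'` infinitely often. -/
def Buchi (M : DTMC AP S) (s : S) (S' : Set S) : Set (M.Path s) :=
  { π | ∀ m, ∃ n, m ≤ n ∧ π.1 n ∈ S' }

/-- Paths visiting `S'` at least once. -/
def Reach (M : DTMC AP S) (s : S) (S' : Set S) : Set (M.Path s) :=
  { π | ∃ n, π.1 n ∈ S' }

end DTMC

/-! ### Truth values -/

/-- Four-bit truth values `b₁b₂b₃b₄`. -/
structure TV where
  b1 : Bool
  b2 : Bool
  b3 : Bool
  b4 : Bool
deriving DecidableEq

namespace TV

/-- The truth value `1111`. -/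
def top : TV := ⟨true, true, true, true⟩

/-- The truth value `0000`. -/
def bot : TV := ⟨false, false, false, false⟩

instance : LE TV := ⟨fun v w => v.b1 ≤ w.b1 ∧ v.b2 ≤ w.b2 ∧ v.b3 ≤ w.b3 ∧ v.b4 ≤ w.b4⟩

instance : LT TV := ⟨fun v w => v ≤ w ∧ ¬w ≤ v⟩

/-- Minimum (bitwise). -/
def inf (v w : TV) : TV := ⟨v.b1 && w.b1, v.b2 && w.b2, v.b3 && w.b3, v.b4 && w.b4⟩

/-- Maximum (bitwise). -/
def sup (v w : TV) : TV := ⟨v.b1 || w.b1, v.b2 || w.b2, v.b3 || w.b3, v.b4 || w.b4⟩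

/-- `v` lies in `B4`, i.e. its bits are monotonically nondecreasing. -/
def InB4 (v : TV) : Prop := v.b1 ≤ v.b2 ∧ v.b2 ≤ v.b3 ∧ v.b3 ≤ v.b4

end TV

/-- The five truth values `1111 ≻ 0111 ≻ 0011 ≻ 0001 ≻ 0000`. -/
inductive B4 : Type
  | t1111 | t0111 | t0011 | t0001 | t0000
deriving DecidableEq

/-- The bit vector of an element of `B4`. -/
def B4.toTV : B4 → TV
  | .t1111 => ⟨true, true, true, true⟩
  | .t0111 => ⟨false, true, true, true⟩
  | .t0011 => ⟨false, false, true, true⟩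
  | .t0001 => ⟨false, false, false, true⟩
  | .t0000 => ⟨false, false, false, false⟩

/-- `v ⪰ t` for a truth value `v` and `t ∈ B4`: if `t` has `k` leading zeros,
then `v ⪰ t` is determined by bit `k+1` of `v`. -/
def TV.ge4 (v : TV) : B4 → Prop
  | .t1111 => v.b1 = true
  | .t0111 => v.b2 = true
  | .t0011 => v.b3 = true
  | .t0001 => v.b4 = true
  | .t0000 => True

/-- The Boolean truth value of a proposition. -/
noncomputable def boolOf (P : Prop) : Bool := @decide P (Classical.propDecidable P)

/-- Comparison operators `∼ ∈ {<, ≤, =, ≥, >}` for probability thresholds. -/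
inductive PCmp : Type
  | lt | le | eq | ge | gt

/-- `PCmp.holds c a b` expresses `a ∼ b`. -/
def PCmp.holds : PCmp → ℝ≥0∞ → ℝ≥0∞ → Prop
  | .lt, a, b => a < b
  | .le, a, b => a ≤ b
  | .eq, a, b => a = b
  | .ge, a, b => b ≤ a
  | .gt, a, b => b < a

/-- Rational probability thresholds `λ ∈ [0,1] ∩ ℚ`. -/
abbrev QProb : Type := Set.Icc (0 : ℚ) 1

/-- The threshold as an extended nonnegative real. -/
noncomputable def QProb.toENNReal (q : QProb) : ℝ≥0∞ := ENNReal.ofReal ((q : ℚ) : ℝ)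

/-! ### PCTL*(◊,□) and rPCTL*: shared syntax and semantics -/

mutual
/-- State formulas of PCTL*(◊,□) (equivalently, of rPCTL*):
`φ ::= p | ¬φ | φ∧φ | φ∨φ | φ→φ | P_{∼λ}[Φ]`. -/
inductive SF (AP : Type) : Type
  | atom : AP → SF AP
  | not : SF AP → SF AP
  | and : SF AP → SF AP → SF AP
  | or : SF AP → SF AP → SF AP
  | imp : SF AP → SF AP → SF AP
  | prob : PCmp → QProb → PFm AP → SF AP

/-- Path formulas of PCTL*(◊,□) (equivalently, of rPCTL*, whose temporal
operators are written with dots): `Φ ::= φ | ¬Φ | Φ∧Φ | Φ∨Φ | Φ→Φ | X Φ | ◊ Φ | □ Φ`. -/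
inductive PFm (AP : Type) : Type
  | state : SF AP → PFm AP
  | not : PFm AP → PFm AP
  | and : PFm AP → PFm AP → PFm AP
  | or : PFm AP → PFm AP → PFm AP
  | imp : PFm AP → PFm AP → PFm AP
  | next : PFm AP → PFm AP
  | ev : PFm AP → PFm AP
  | alw : PFm AP → PFm AP
end

mutual
/-- `φ` contains no implications. -/
def SF.NoImp {AP : Type} : SF AP → Prop
  | .atom _ => True
  | .not φ => φ.NoImp
  | .and φ ψ => φ.NoImp ∧ ψ.NoImp
  | .or φ ψ => φ.NoImp ∧ ψ.NoImp
  | .imp _ _ => False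
  | .prob _ _ Φ => Φ.NoImp

/-- `Φ` contains no implications. -/
def PFm.NoImp {AP : Type} : PFm AP → Prop
  | .state φ => φ.NoImp
  | .not Φ => Φ.NoImp
  | .and Φ Ψ => Φ.NoImp ∧ Ψ.NoImp
  | .or Φ Ψ => Φ.NoImp ∧ Ψ.NoImp
  | .imp _ _ => False
  | .next Φ => Φ.NoImp
  | .ev Φ => Φ.NoImp
  | .alw Φ => Φ.NoImp
end

mutual
/-- The standard PCTL* semantics `M,s ⊨ φ` for state formulas, relative to the
family of cylinder-set measures `μ s`. -/
def SF.Sat {AP S : Type} [Fintype S] (M : DTMC AP S)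
    (μ : ∀ s : S, MeasureTheory.Measure (M.Path s)) : SF AP → S → Prop
  | .atom p, s => p ∈ M.label s
  | .not φ, s => ¬ SF.Sat M μ φ s
  | .and φ ψ, s => SF.Sat M μ φ s ∧ SF.Sat M μ ψ s
  | .or φ ψ, s => SF.Sat M μ φ s ∨ SF.Sat M μ ψ s
  | .imp φ ψ, s => SF.Sat M μ φ s → SF.Sat M μ ψ s
  | .prob c l Φ, s => c.holds (μ s { π | PFm.Sat M μ Φ π.toU }) l.toENNReal

/-- The standard PCTL* (i.e. LTL) semantics `M,π ⊨ Φ` for path formulas. -/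
def PFm.Sat {AP S : Type} [Fintype S] (M : DTMC AP S)
    (μ : ∀ s : S, MeasureTheory.Measure (M.Path s)) : PFm AP → M.PathU → Prop
  | .state φ, π => SF.Sat M μ φ (π.1 0)
  | .not Φ, π => ¬ PFm.Sat M μ Φ π
  | .and Φ Ψ, π => PFm.Sat M μ Φ π ∧ PFm.Sat M μ Ψ π
  | .or Φ Ψ, π => PFm.Sat M μ Φ π ∨ PFm.Sat M μ Ψ π
  | .imp Φ Ψ, π => PFm.Sat M μ Φ π → PFm.Sat M μ Ψ π
  | .next Φ, π => PFm.Sat M μ Φ (π.suffix 1)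
  | .ev Φ, π => ∃ n, PFm.Sat M μ Φ (π.suffix n)
  | .alw Φ, π => ∀ n, PFm.Sat M μ Φ (π.suffix n)
end

/-- The maximum of a set of truth values from `B4` (the least value `0000`
if the set is empty). -/
noncomputable def maxB4 (A : Set B4) : B4 :=
  if B4.t1111 ∈ A then .t1111
  else if B4.t0111 ∈ A then .t0111
  else if B4.t0011 ∈ A then .t0011
  else if B4.t0001 ∈ A then .t0001
  else .t0000

mutual
/-- The rPCTL* evaluation function `V_M` on state formulas, relative to the
family of cylinder-set measures `μ s`. -/
noncomputable def SF.val {AP S : Type} [Fintype S] (M : DTMC AP S)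
    (μ : ∀ s : S, MeasureTheory.Measure (M.Path s)) : SF AP → S → TV
  | .atom p, s => if p ∈ M.label s then TV.top else TV.bot
  | .not φ, s => if SF.val M μ φ s = TV.top then TV.bot else TV.top
  | .and φ ψ, s => (SF.val M μ φ s).inf (SF.val M μ ψ s)
  | .or φ ψ, s => (SF.val M μ φ s).sup (SF.val M μ ψ s)
  | .imp φ ψ, s =>
      if SF.val M μ φ s ≤ SF.val M μ ψ s then TV.top else SF.val M μ ψ s
  | .prob c l Φ, s =>
      (maxB4 { b | c.holds (μ s { π | (PFm.val M μ Φ π.toU).ge4 b }) l.toENNReal }).toTV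

/-- The rPCTL* evaluation function `V_M` on path formulas. -/
noncomputable def PFm.val {AP S : Type} [Fintype S] (M : DTMC AP S)
    (μ : ∀ s : S, MeasureTheory.Measure (M.Path s)) : PFm AP → M.PathU → TV
  | .state φ, π => SF.val M μ φ (π.1 0)
  | .not Φ, π => if PFm.val M μ Φ π = TV.top then TV.bot else TV.top
  | .and Φ Ψ, π => (PFm.val M μ Φ π).inf (PFm.val M μ Ψ π)
  | .or Φ Ψ, π => (PFm.val M μ Φ π).sup (PFm.val M μ Ψ π)
  | .imp Φ Ψ, π =>
      if PFm.val M μ Φ π ≤ PFm.val M μ Ψ π then TV.top else PFm.val M μ Ψ π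
  | .next Φ, π => PFm.val M μ Φ (π.suffix 1)
  | .ev Φ, π =>
      ⟨boolOf (∃ n, (PFm.val M μ Φ (π.suffix n)).b1 = true),
       boolOf (∃ n, (PFm.val M μ Φ (π.suffix n)).b2 = true),
       boolOf (∃ n, (PFm.val M μ Φ (π.suffix n)).b3 = true),
       boolOf (∃ n, (PFm.val M μ Φ (π.suffix n)).b4 = true)⟩
  | .alw Φ, π =>
      ⟨boolOf (∀ n, (PFm.val M μ Φ (π.suffix n)).b1 = true),
       boolOf (∃ m, ∀ n, m ≤ n → (PFm.val M μ Φ (π.suffix n)).b2 = true),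
       boolOf (∀ m, ∃ n, m ≤ n ∧ (PFm.val M μ Φ (π.suffix n)).b3 = true),
       boolOf (∃ n, (PFm.val M μ Φ (π.suffix n)).b4 = true)⟩
end

/-! ### Auxiliary lemmas -/

theorem boolOf_iff (P : Prop) : boolOf P = true ↔ P := by
  unfold boolOf
  exact @decide_eq_true_iff P (Classical.propDecidable P)

theorem bool_le_iff (a b : Bool) : a ≤ b ↔ (a = true → b = true) := by
  cases a <;> cases b <;> simp

theorem TV.top_inB4 : TV.top.InB4 := by
  simp [TV.InB4, TV.top, bool_le_iff]

theorem TV.bot_inB4 : TV.bot.InB4 := by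
  simp [TV.InB4, TV.bot, bool_le_iff]

theorem B4.toTV_inB4 (b : B4) : b.toTV.InB4 := by
  cases b <;> simp [TV.InB4, B4.toTV, bool_le_iff]

theorem TV.inf_inB4 {v w : TV} (hv : v.InB4) (hw : w.InB4) : (v.inf w).InB4 := by
  simp only [TV.InB4, TV.inf, bool_le_iff, Bool.and_eq_true] at *
  tauto

theorem TV.sup_inB4 {v w : TV} (hv : v.InB4) (hw : w.InB4) : (v.sup w).InB4 := by
  simp only [TV.InB4, TV.sup, bool_le_iff, Bool.or_eq_true] at *
  tauto

theorem TV.eq_top_of_b1 : ∀ {v : TV}, v.InB4 → v.b1 = true → v = TV.top := by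
  rintro ⟨a, b, c, d⟩ h h1
  simp only [TV.InB4, bool_le_iff] at h
  simp only [TV.top, TV.mk.injEq]
  simp only at h1 ⊢
  exact ⟨h1, h.1 h1, h.2.1 (h.1 h1), h.2.2 (h.2.1 (h.1 h1))⟩

theorem TV.InB4.b12 {v : TV} (h : v.InB4) : v.b1 = true → v.b2 = true := by
  simpa only [TV.InB4, bool_le_iff] using h.1

theorem TV.InB4.b23 {v : TV} (h : v.InB4) : v.b2 = true → v.b3 = true := by
  simpa only [TV.InB4, bool_le_iff] using h.2.1

theorem TV.InB4.b34 {v : TV} (h : v.InB4) : v.b3 = true → v.b4 = true := by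
  simpa only [TV.InB4, bool_le_iff] using h.2.2

theorem boolOf_le_boolOf {P Q : Prop} (h : P → Q) : boolOf P ≤ boolOf Q := by
  by_cases hP : P
  · have : boolOf Q = true := (boolOf_iff Q).mpr (h hP)
    simp [this]
  · have : boolOf P = false := by
      cases hb : boolOf P
      · rfl
      · exact absurd ((boolOf_iff P).mp hb) hP
    simp [this]

theorem maxB4_b1 (A : Set B4) :
    ((maxB4 A).toTV.b1 = true) ↔ B4.t1111 ∈ A := by
  unfold maxB4
  split_ifs with h1 h2 h3 h4 <;> simp [B4.toTV] <;> assumption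

mutual
/-- The value of any state formula has monotone bits. -/
theorem SF.val_inB4 {AP S : Type} [Fintype S] (M : DTMC AP S)
    (μ : ∀ s : S, MeasureTheory.Measure (M.Path s)) :
    ∀ (φ : SF AP) (s : S), (SF.val M μ φ s).InB4
  | .atom p, s => by
      simp only [SF.val]; split_ifs <;> [exact TV.top_inB4; exact TV.bot_inB4]
  | .not φ, s => by
      simp only [SF.val]; split_ifs <;> [exact TV.bot_inB4; exact TV.top_inB4]
  | .and φ ψ, s => by
      simp only [SF.val]
      exact TV.inf_inB4 (SF.val_inB4 M μ φ s) (SF.val_inB4 M μ ψ s)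
  | .or φ ψ, s => by
      simp only [SF.val]
      exact TV.sup_inB4 (SF.val_inB4 M μ φ s) (SF.val_inB4 M μ ψ s)
  | .imp φ ψ, s => by
      simp only [SF.val]
      split_ifs <;> [exact TV.top_inB4; exact SF.val_inB4 M μ ψ s]
  | .prob c l Φ, s => by
      simp only [SF.val]
      exact B4.toTV_inB4 _

/-- The value of any path formula has monotone bits. -/
theorem PFm.val_inB4 {AP S : Type} [Fintype S] (M : DTMC AP S)
    (μ : ∀ s : S, MeasureTheory.Measure (M.Path s)) :
    ∀ (Φ : PFm AP) (π : M.PathU), (PFm.val M μ Φ π).InB4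
  | .state φ, π => by
      simp only [PFm.val]; exact SF.val_inB4 M μ φ (π.1 0)
  | .not Φ, π => by
      simp only [PFm.val]; split_ifs <;> [exact TV.bot_inB4; exact TV.top_inB4]
  | .and Φ Ψ, π => by
      simp only [PFm.val]
      exact TV.inf_inB4 (PFm.val_inB4 M μ Φ π) (PFm.val_inB4 M μ Ψ π)
  | .or Φ Ψ, π => by
      simp only [PFm.val]
      exact TV.sup_inB4 (PFm.val_inB4 M μ Φ π) (PFm.val_inB4 M μ Ψ π)
  | .imp Φ Ψ, π => by
      simp only [PFm.val]
      split_ifs <;> [exact TV.top_inB4; exact PFm.val_inB4 M μ Ψ π]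
  | .next Φ, π => by
      simp only [PFm.val]; exact PFm.val_inB4 M μ Φ (π.suffix 1)
  | .ev Φ, π => by
      simp only [PFm.val]
      have h : ∀ n, (PFm.val M μ Φ (π.suffix n)).InB4 :=
        fun n => PFm.val_inB4 M μ Φ (π.suffix n)
      refine ⟨?_, ?_, ?_⟩
      · exact boolOf_le_boolOf fun ⟨n, hn⟩ => ⟨n, (h n).b12 hn⟩
      · exact boolOf_le_boolOf fun ⟨n, hn⟩ => ⟨n, (h n).b23 hn⟩
      · exact boolOf_le_boolOf fun ⟨n, hn⟩ => ⟨n, (h n).b34 hn⟩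
  | .alw Φ, π => by
      simp only [PFm.val]
      have h : ∀ n, (PFm.val M μ Φ (π.suffix n)).InB4 :=
        fun n => PFm.val_inB4 M μ Φ (π.suffix n)
      refine ⟨?_, ?_, ?_⟩
      · exact boolOf_le_boolOf fun hall => ⟨0, fun n _ => (h n).b12 (hall n)⟩
      · exact boolOf_le_boolOf fun ⟨m, hm⟩ m' =>
          ⟨max m m', le_max_right m m', (h _).b23 (hm _ (le_max_left m m'))⟩
      · exact boolOf_le_boolOf fun hall => by
          obtain ⟨n, _, hn⟩ := hall 0
          exact ⟨n, (h n).b34 hn⟩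

end

mutual
/-- For implication-free state formulas, bit 1 of the value is satisfaction. -/
theorem SF.val_b1 {AP S : Type} [Fintype S] (M : DTMC AP S)
    (μ : ∀ s : S, MeasureTheory.Measure (M.Path s)) :
    ∀ (φ : SF AP), φ.NoImp → ∀ s : S,
      ((SF.val M μ φ s).b1 = true ↔ SF.Sat M μ φ s)
  | .atom p, _, s => by
      simp only [SF.val, SF.Sat]
      split_ifs with h <;> simp [TV.top, TV.bot, h]
  | .not φ, hni, s => by
      have ih := SF.val_b1 M μ φ hni s
      simp only [SF.val, SF.Sat]
      split_ifs with h
      · simp only [TV.bot, Bool.false_eq_true, false_iff, not_not]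
        exact ih.mp (by rw [h]; rfl)
      · simp only [TV.top, true_iff]
        intro hsat
        exact h (TV.eq_top_of_b1 (SF.val_inB4 M μ φ s) (ih.mpr hsat))
  | .and φ ψ, hni, s => by
      have ih1 := SF.val_b1 M μ φ hni.1 s
      have ih2 := SF.val_b1 M μ ψ hni.2 s
      simp only [SF.val, SF.Sat, TV.inf, Bool.and_eq_true, ih1, ih2]
  | .or φ ψ, hni, s => by
      have ih1 := SF.val_b1 M μ φ hni.1 s
      have ih2 := SF.val_b1 M μ ψ hni.2 s
      simp only [SF.val, SF.Sat, TV.sup, Bool.or_eq_true, ih1, ih2]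
  | .imp φ ψ, hni, s => absurd hni not_false
  | .prob c l Φ, hni, s => by
      have ih := PFm.val_b1 M μ Φ hni
      simp only [SF.val, SF.Sat]
      rw [maxB4_b1]
      have hset : { π : M.Path s | (PFm.val M μ Φ π.toU).ge4 B4.t1111 }
          = { π : M.Path s | PFm.Sat M μ Φ π.toU } := by
        ext π
        exact ih π.toU
      show c.holds (μ s { π | (PFm.val M μ Φ π.toU).ge4 B4.t1111 }) l.toENNReal ↔ _
      rw [hset]

/-- For implication-free path formulas, bit 1 of the value is satisfaction. -/
theorem PFm.val_b1 {AP S : Type} [Fintype S] (M : DTMC AP S)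
    (μ : ∀ s : S, MeasureTheory.Measure (M.Path s)) :
    ∀ (Φ : PFm AP), Φ.NoImp → ∀ π : M.PathU,
      ((PFm.val M μ Φ π).b1 = true ↔ PFm.Sat M μ Φ π)
  | .state φ, hni, π => by
      simp only [PFm.val, PFm.Sat]
      exact SF.val_b1 M μ φ hni (π.1 0)
  | .not Φ, hni, π => by
      have ih := PFm.val_b1 M μ Φ hni π
      simp only [PFm.val, PFm.Sat]
      split_ifs with h
      · simp only [TV.bot, Bool.false_eq_true, false_iff, not_not]
        exact ih.mp (by rw [h]; rfl)
      · simp only [TV.top, true_iff]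
        intro hsat
        exact h (TV.eq_top_of_b1 (PFm.val_inB4 M μ Φ π) (ih.mpr hsat))
  | .and Φ Ψ, hni, π => by
      have ih1 := PFm.val_b1 M μ Φ hni.1 π
      have ih2 := PFm.val_b1 M μ Ψ hni.2 π
      simp only [PFm.val, PFm.Sat, TV.inf, Bool.and_eq_true, ih1, ih2]
  | .or Φ Ψ, hni, π => by
      have ih1 := PFm.val_b1 M μ Φ hni.1 π
      have ih2 := PFm.val_b1 M μ Ψ hni.2 π
      simp only [PFm.val, PFm.Sat, TV.sup, Bool.or_eq_true, ih1, ih2]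
  | .imp Φ Ψ, hni, π => absurd hni not_false
  | .next Φ, hni, π => by
      simp only [PFm.val, PFm.Sat]
      exact PFm.val_b1 M μ Φ hni (π.suffix 1)
  | .ev Φ, hni, π => by
      have ih := fun n => PFm.val_b1 M μ Φ hni (π.suffix n)
      simp only [PFm.val, PFm.Sat]
      show boolOf _ = true ↔ _
      rw [boolOf_iff]
      exact exists_congr ih
  | .alw Φ, hni, π => by
      have ih := fun n => PFm.val_b1 M μ Φ hni (π.suffix n)
      simp only [PFm.val, PFm.Sat]
      show boolOf _ = true ↔ _
      rw [boolOf_iff]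
      exact forall_congr' ih

end

/-- Let `φ` be a PCTL*(◊,□) state formula without implications
and `M` a DTMC with initial state `s_I`. Then `M, s_I ⊨ φ` iff
`V_M(s_I, φ̇) = 1111`, where `φ̇` is obtained from `φ` by dotting all temporal
operators (rPCTL* and PCTL*(◊,□) share the same syntax, so dotting is implicit). -/
theorem pctlstar_sat_iff_rpctlstar_val_top {AP S : Type} [Fintype S] (M : DTMC AP S)
    (μ : ∀ s : S, MeasureTheory.Measure (M.Path s))
    (hμ : ∀ s : S, M.IsCylinderMeasure s (μ s))
    (φ : SF AP) (hφ : φ.NoImp) :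
    SF.Sat M μ φ M.init ↔ SF.val M μ φ M.init = TV.top := by
  constructor
  · intro h
    exact TV.eq_top_of_b1 (SF.val_inB4 M μ φ M.init)
      ((SF.val_b1 M μ φ hφ M.init).mpr h)
  · intro h
    exact (SF.val_b1 M μ φ hφ M.init).mp (by rw [h]; rfl)
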